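/- Let n, m ∈ ℕ. For each multi-index α with |α| ≤ m let a_α : ℝⁿ → ℂ be continuously differentiable with a_α and its first partial derivatives bounded, and let P = Σ_{|α| ≤ m} a_α(x) D^α with D_j = −i ∂_j. Let p_m(x,η) = Σ_{|α| = m} a_α(x) η^α denote the principal symbol. Fix x₀ ∈ ℝⁿ, ξ ∈ ℝⁿ, and u ∈ C_c^∞(ℝⁿ), and for τ ≥ 1 set u_τ(x) = e^{−iτ(x − x₀)·ξ} u(√τ (x − x₀)). Then there is a constant C > 0 such that for all τ ≥ 1, sup_{x ∈ ℝⁿ} | (P u_τ)(x) − p_m(x₀, −τξ) u_τ(x) | ≤ C τ^{m − 1/2}. -/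

import Mathlib

open Matrix

/-- Partial derivative `∂_j f` of a complex-valued function on `ℝⁿ`. -/
noncomputable def pdC {n : ℕ} (j : Fin n) (f : (Fin n → ℝ) → ℂ) : (Fin n → ℝ) → ℂ :=
  fun x => fderiv ℝ f x (Pi.single j 1)

/-- `k`-fold partial derivative `∂_j^k f`. -/
noncomputable def pdPow {n : ℕ} (j : Fin n) : ℕ → ((Fin n → ℝ) → ℂ) → ((Fin n → ℝ) → ℂ)
  | 0, f => f
  | k + 1, f => pdC j (pdPow j k f)

/-- The multi-index partial derivative `∂^α f = ∂_1^{α 1} ⋯ ∂_n^{α n} f`. -/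
noncomputable def pdMulti {n : ℕ} (α : Fin n → ℕ) (f : (Fin n → ℝ) → ℂ) :
    (Fin n → ℝ) → ℂ :=
  (List.finRange n).foldr (fun j g => pdPow j (α j) g) f

/-- The wave packet `u_τ(x) = e^{−iτ(x − x₀)·ξ} u(√τ(x − x₀))`. -/
noncomputable def wavePacket {n : ℕ} (x₀ ξ : Fin n → ℝ) (u : (Fin n → ℝ) → ℂ) (τ : ℝ) :
    (Fin n → ℝ) → ℂ :=
  fun x => Complex.exp (-Complex.I * (τ : ℂ) * (((x - x₀) ⬝ᵥ ξ : ℝ) : ℂ)) *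
    u (Real.sqrt τ • (x - x₀))

lemma pdC_contDiff {n : ℕ} (j : Fin n) {f : (Fin n → ℝ) → ℂ} (hf : ContDiff ℝ (⊤ : ℕ∞) f) :
    ContDiff ℝ (⊤ : ℕ∞) (pdC j f) :=
  (hf.fderiv_right (m := (⊤ : ℕ∞)) le_rfl).clm_apply (by exact contDiff_const)

lemma pdC_comb {n : ℕ} (j : Fin n) (c₁ c₂ : ℂ) {f g : (Fin n → ℝ) → ℂ}
    (hf : Differentiable ℝ f) (hg : Differentiable ℝ g) :
    pdC j (fun x => c₁ * f x + c₂ * g x) = fun x => c₁ * pdC j f x + c₂ * pdC j g x := by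
  funext x
  simp only [pdC]
  rw [fderiv_fun_add ((hf x).const_mul c₁) ((hg x).const_mul c₂),
    fderiv_const_mul (hf x) c₁, fderiv_const_mul (hg x) c₂]
  simp

noncomputable def pdIter {n : ℕ} (L : List (Fin n)) (f : (Fin n → ℝ) → ℂ) :
    (Fin n → ℝ) → ℂ :=
  L.foldr pdC f

@[simp] lemma pdIter_nil {n : ℕ} (f : (Fin n → ℝ) → ℂ) : pdIter [] f = f := rfl

lemma pdIter_cons {n : ℕ} (j : Fin n) (L : List (Fin n)) (f : (Fin n → ℝ) → ℂ) :
    pdIter (j :: L) f = pdC j (pdIter L f) := rfl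

lemma pdIter_concat {n : ℕ} (j : Fin n) (L : List (Fin n)) (f : (Fin n → ℝ) → ℂ) :
    pdIter (L ++ [j]) f = pdIter L (pdC j f) := by
  simp [pdIter, List.foldr_append]

lemma pdIter_contDiff {n : ℕ} (L : List (Fin n)) {f : (Fin n → ℝ) → ℂ}
    (hf : ContDiff ℝ (⊤ : ℕ∞) f) : ContDiff ℝ (⊤ : ℕ∞) (pdIter L f) := by
  induction L with
  | nil => exact hf
  | cons j L ih => exact pdC_contDiff j ih

lemma pdIter_comb {n : ℕ} (L : List (Fin n)) (c₁ c₂ : ℂ) {f g : (Fin n → ℝ) → ℂ}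
    (hf : ContDiff ℝ (⊤ : ℕ∞) f) (hg : ContDiff ℝ (⊤ : ℕ∞) g) :
    pdIter L (fun x => c₁ * f x + c₂ * g x) = fun x => c₁ * pdIter L f x + c₂ * pdIter L g x := by
  induction L with
  | nil => rfl
  | cons j L ih =>
    rw [pdIter_cons, ih, pdC_comb j c₁ c₂ ((pdIter_contDiff L hf).differentiable (by simp))
      ((pdIter_contDiff L hg).differentiable (by simp)), pdIter_cons, pdIter_cons]

lemma pdC_compactSupport {n : ℕ} (j : Fin n) {f : (Fin n → ℝ) → ℂ}
    (hf : HasCompactSupport f) : HasCompactSupport (pdC j f) := by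
  have h1 : HasCompactSupport (fderiv ℝ f) := hf.fderiv (𝕜 := ℝ)
  have : pdC j f = (fun L : (Fin n → ℝ) →L[ℝ] ℂ => L (Pi.single j 1)) ∘ (fderiv ℝ f) := rfl
  rw [this]
  exact h1.comp_left (by simp)

lemma pdIter_bound {n : ℕ} (R : ℕ) :
    ∀ (f : (Fin n → ℝ) → ℂ), ContDiff ℝ (⊤ : ℕ∞) f → HasCompactSupport f →
      ∃ C : ℝ, 0 ≤ C ∧ ∀ L : List (Fin n), L.length ≤ R → ∀ y, ‖pdIter L f y‖ ≤ C := by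
  induction R with
  | zero =>
    intro f hf hs
    obtain ⟨C, hC⟩ := hs.exists_bound_of_continuous hf.continuous
    refine ⟨C, le_trans (norm_nonneg (f 0)) (hC 0), ?_⟩
    intro L hL y
    rw [List.length_eq_zero_iff.mp (Nat.le_zero.mp hL)]
    exact hC y
  | succ R ih =>
    intro f hf hs
    obtain ⟨C0, hC0, h0⟩ := ih f hf hs
    have hder : ∀ j : Fin n, ∃ C : ℝ, 0 ≤ C ∧ ∀ L : List (Fin n), L.length ≤ R →
        ∀ y, ‖pdIter L (pdC j f) y‖ ≤ C := fun j =>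
      ih (pdC j f) (pdC_contDiff j hf) (pdC_compactSupport j hs)
    choose Cj hCj0 hCj using hder
    have hsum : (0:ℝ) ≤ ∑ j, Cj j := Finset.sum_nonneg fun j _ => hCj0 j
    refine ⟨C0 + ∑ j, Cj j, by linarith, ?_⟩
    intro L hL y
    rcases List.eq_nil_or_concat L with h | ⟨L', j, rfl⟩
    · subst h
      exact le_trans (h0 [] (Nat.zero_le _) y) (by
        have : (0:ℝ) ≤ ∑ j, Cj j := Finset.sum_nonneg fun j _ => hCj0 j
        linarith)
    · rw [List.concat_eq_append, pdIter_concat]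
      have hlen : L'.length ≤ R := by simpa using Nat.succ_le_succ_iff.mp (by simpa using hL)
      refine le_trans (hCj j L' hlen y) ?_
      have h1 : Cj j ≤ ∑ i, Cj i := Finset.single_le_sum (fun i _ => hCj0 i) (Finset.mem_univ j)
      linarith

section WP
variable {n : ℕ} (x₀ ξ : Fin n → ℝ)

noncomputable def phaseE (τ : ℝ) (x : Fin n → ℝ) : ℂ :=
  Complex.exp (-Complex.I * (τ : ℂ) * (((x - x₀) ⬝ᵥ ξ : ℝ) : ℂ))

lemma hasFDerivAt_dot (x : Fin n → ℝ) :
    HasFDerivAt (fun x : Fin n → ℝ => (x - x₀) ⬝ᵥ ξ)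
      (∑ i, ξ i • ContinuousLinearMap.proj (R := ℝ) (φ := fun _ : Fin n => ℝ) i) x := by
  simp only [dotProduct, Pi.sub_apply]
  apply HasFDerivAt.fun_sum
  intro i _
  have h1 : HasFDerivAt (fun x : Fin n → ℝ => x i - x₀ i)
      (ContinuousLinearMap.proj (R := ℝ) (φ := fun _ : Fin n => ℝ) i) x :=
    (hasFDerivAt_apply i x).sub_const (x₀ i)
  have := h1.mul_const (ξ i)
  convert this using 1

lemma dot_apply_single (j : Fin n) :
    (∑ i, ξ i • ContinuousLinearMap.proj (R := ℝ) (φ := fun _ : Fin n => ℝ) i)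
      (Pi.single j 1) = ξ j := by
  simp [ContinuousLinearMap.sum_apply, Pi.single_apply]

lemma wp_deriv (τ : ℝ) (v : (Fin n → ℝ) → ℂ) (hv : Differentiable ℝ v) (j : Fin n) :
    pdC j (fun x => phaseE x₀ ξ τ x * v (Real.sqrt τ • (x - x₀))) =
    fun x => phaseE x₀ ξ τ x *
      ((-Complex.I * τ * ξ j) * v (Real.sqrt τ • (x - x₀)) +
        (Real.sqrt τ : ℂ) * pdC j v (Real.sqrt τ • (x - x₀))) := by
  funext x
  set y := Real.sqrt τ • (x - x₀) with hy
  set Lg := (∑ i, ξ i • ContinuousLinearMap.proj (R := ℝ) (φ := fun _ : Fin n => ℝ) i)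
  have hg := hasFDerivAt_dot x₀ ξ x
  have hgc : HasFDerivAt (fun x : Fin n → ℝ => (((x - x₀) ⬝ᵥ ξ : ℝ) : ℂ))
      (Complex.ofRealCLM.comp Lg) x := Complex.ofRealCLM.hasFDerivAt.comp x hg
  have hph : HasFDerivAt (fun x : Fin n → ℝ => -Complex.I * (τ : ℂ) * (((x - x₀) ⬝ᵥ ξ : ℝ) : ℂ))
      ((-Complex.I * (τ : ℂ)) • (Complex.ofRealCLM.comp Lg)) x := by
    simpa [mul_assoc] using hgc.const_mul (-Complex.I * (τ : ℂ))
  have hE : HasFDerivAt (phaseE x₀ ξ τ)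
      (Complex.exp (-Complex.I * (τ : ℂ) * (((x - x₀) ⬝ᵥ ξ : ℝ) : ℂ)) •
        ((-Complex.I * (τ : ℂ)) • (Complex.ofRealCLM.comp Lg))) x := hph.cexp
  have hinner : HasFDerivAt (fun x : Fin n → ℝ => Real.sqrt τ • (x - x₀))
      (Real.sqrt τ • ContinuousLinearMap.id ℝ (Fin n → ℝ)) x :=
    ((hasFDerivAt_id x).sub_const x₀).const_smul (Real.sqrt τ)
  have hV : HasFDerivAt (fun x : Fin n → ℝ => v (Real.sqrt τ • (x - x₀)))
      ((fderiv ℝ v y).comp (Real.sqrt τ • ContinuousLinearMap.id ℝ (Fin n → ℝ))) x :=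
    ((hv y).hasFDerivAt).comp x hinner
  have hF := hE.fun_mul hV
  have hfd := hF.fderiv
  simp only [pdC, hfd]
  simp only [ContinuousLinearMap.add_apply, ContinuousLinearMap.smul_apply,
    ContinuousLinearMap.comp_apply, ContinuousLinearMap.id_apply, Complex.ofRealCLM_apply,
    dot_apply_single, phaseE]
  have h1 : (fderiv ℝ v y) (Real.sqrt τ • (Pi.single j 1 : Fin n → ℝ))
      = Real.sqrt τ • (fderiv ℝ v y) ((Pi.single j 1 : Fin n → ℝ)) :=
    (fderiv ℝ v y).map_smul _ _
  have h2 : Lg (Pi.single j 1) = ξ j := dot_apply_single ξ j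
  rw [h1, h2]
  simp only [smul_eq_mul, Complex.real_smul, pdC, hy]
  ring

end WP


noncomputable def ampT {n : ℕ} (ξ : Fin n → ℝ) (j : Fin n) (τ : ℝ) (g : (Fin n → ℝ) → ℂ) :
    (Fin n → ℝ) → ℂ :=
  fun y => (-Complex.I * τ * ξ j) * g y + (Real.sqrt τ : ℂ) * pdC j g y

lemma ampT_contDiff {n : ℕ} (ξ : Fin n → ℝ) (j : Fin n) (τ : ℝ) {g : (Fin n → ℝ) → ℂ}
    (hg : ContDiff ℝ (⊤ : ℕ∞) g) : ContDiff ℝ (⊤ : ℕ∞) (ampT ξ j τ g) :=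
  (contDiff_const.mul hg).add (contDiff_const.mul (pdC_contDiff j hg))

def GoodAmp {n : ℕ} (u : (Fin n → ℝ) → ℂ) (k r : ℕ) (c : ℝ → ℂ)
    (A : ℝ → (Fin n → ℝ) → ℂ) : Prop :=
  (∀ τ : ℝ, 1 ≤ τ → ContDiff ℝ (⊤ : ℕ∞) (A τ)) ∧
  ∃ C : ℝ, 0 ≤ C ∧ ∀ τ : ℝ, 1 ≤ τ →
    (‖c τ‖ ≤ C * τ ^ k) ∧
    (∀ L : List (Fin n), L.length ≤ r → ∀ y, ‖pdIter L (A τ) y‖ ≤ C * τ ^ k) ∧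
    (∀ y, ‖A τ y - c τ * u y‖ ≤ C * τ ^ ((k : ℝ) - 1/2))

lemma sqrt_mul_pow_le {τ : ℝ} (hτ : 1 ≤ τ) (k : ℕ) :
    Real.sqrt τ * τ ^ k = τ ^ (((k+1 : ℕ) : ℝ) - 1/2) := by
  have h0 : (0:ℝ) < τ := lt_of_lt_of_le one_pos hτ
  rw [Real.sqrt_eq_rpow, ← Real.rpow_natCast τ k, ← Real.rpow_add h0]
  congr 1
  push_cast
  ring

lemma tau_mul_rpow {τ : ℝ} (hτ : 1 ≤ τ) (k : ℕ) :
    τ * τ ^ (((k:ℕ) : ℝ) - 1/2) = τ ^ (((k+1 : ℕ) : ℝ) - 1/2) := by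
  have h0 : (0:ℝ) < τ := lt_of_lt_of_le one_pos hτ
  rw [show (((k+1 : ℕ) : ℝ) - 1/2) = 1 + ((k:ℝ) - 1/2) by push_cast; ring,
    Real.rpow_add h0, Real.rpow_one]

lemma GoodAmp.step {n : ℕ} {u : (Fin n → ℝ) → ℂ} {k r : ℕ} {c : ℝ → ℂ}
    {A : ℝ → (Fin n → ℝ) → ℂ} (hG : GoodAmp u k (r + 1) c A) (ξ : Fin n → ℝ) (j : Fin n) :
    GoodAmp u (k + 1) r (fun τ => (-Complex.I * τ * ξ j) * c τ)
      (fun τ => ampT ξ j τ (A τ)) := by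
  obtain ⟨hsm, C, hC0, hC⟩ := hG
  refine ⟨fun τ hτ => ampT_contDiff ξ j τ (hsm τ hτ), (|ξ j| + 1) * C, by positivity, ?_⟩
  intro τ hτ
  obtain ⟨hc, hL, hR⟩ := hC τ hτ
  have h0 : (0:ℝ) < τ := lt_of_lt_of_le one_pos hτ
  have habs : ‖(-Complex.I * τ * ξ j : ℂ)‖ = τ * |ξ j| := by
    simp [abs_of_pos h0]
  have hsqrt_norm : ‖((Real.sqrt τ : ℝ) : ℂ)‖ = Real.sqrt τ := by
    simp [Real.sqrt_nonneg]
  have hsqrt_le : Real.sqrt τ ≤ τ := (Real.sqrt_le_left h0.le).mpr (by nlinarith)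
  have ec1 : ∀ z : ℂ, ‖(-Complex.I * τ * ξ j) * z‖ = τ * |ξ j| * ‖z‖ := fun z => by
    rw [norm_mul, habs]
  have ec2 : ∀ z : ℂ, ‖((Real.sqrt τ : ℝ) : ℂ) * z‖ = Real.sqrt τ * ‖z‖ := fun z => by
    rw [norm_mul, hsqrt_norm]
  have hsq0 : 0 ≤ Real.sqrt τ := Real.sqrt_nonneg τ
  refine ⟨?_, ?_, ?_⟩
  · rw [norm_mul, habs, pow_succ]
    calc τ * |ξ j| * ‖c τ‖ ≤ τ * |ξ j| * (C * τ ^ k) := by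
          apply mul_le_mul_of_nonneg_left hc (by positivity)
      _ = |ξ j| * (C * (τ ^ k * τ)) := by ring
      _ ≤ (|ξ j| + 1) * (C * (τ ^ k * τ)) := by
          apply mul_le_mul_of_nonneg_right (by linarith [abs_nonneg (ξ j)]) (by positivity)
      _ = (|ξ j| + 1) * C * (τ ^ k * τ) := by ring
  · intro L hlen y
    have hcomb := pdIter_comb L (-Complex.I * τ * ξ j) ((Real.sqrt τ : ℝ) : ℂ)
      (hsm τ hτ) (pdC_contDiff j (hsm τ hτ))
    have : pdIter L (ampT ξ j τ (A τ)) y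
        = (-Complex.I * τ * ξ j) * pdIter L (A τ) y
          + ((Real.sqrt τ : ℝ) : ℂ) * pdIter (L ++ [j]) (A τ) y := by
      rw [pdIter_concat]
      exact congrFun (by exact hcomb) y
    rw [this]
    have h1 : ‖pdIter L (A τ) y‖ ≤ C * τ ^ k := hL L (le_trans hlen (Nat.le_succ r)) y
    have h2 : ‖pdIter (L ++ [j]) (A τ) y‖ ≤ C * τ ^ k := by
      apply hL
      simp [Nat.succ_le_succ hlen]
    calc ‖_ + _‖ ≤ τ * |ξ j| * ‖pdIter L (A τ) y‖ + Real.sqrt τ * ‖pdIter (L ++ [j]) (A τ) y‖ := by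
          refine le_trans (norm_add_le _ _) ?_
          rw [ec1, ec2]
      _ ≤ τ * |ξ j| * (C * τ ^ k) + τ * (C * τ ^ k) := by
          have := mul_le_mul_of_nonneg_left h1 (mul_nonneg h0.le (abs_nonneg (ξ j)))
          have h2' : Real.sqrt τ * ‖pdIter (L ++ [j]) (A τ) y‖ ≤ τ * (C * τ ^ k) := by
            apply mul_le_mul hsqrt_le h2 (norm_nonneg _) h0.le
          linarith
      _ ≤ (|ξ j| + 1) * C * τ ^ (k + 1) := by
          rw [pow_succ]
          nlinarith [pow_pos h0 k, abs_nonneg (ξ j), mul_nonneg hC0 (pow_pos h0 k).le]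
  · intro y
    have hid : ampT ξ j τ (A τ) y - (-Complex.I * τ * ξ j) * c τ * u y
        = (-Complex.I * τ * ξ j) * (A τ y - c τ * u y)
          + ((Real.sqrt τ : ℝ) : ℂ) * pdC j (A τ) y := by
      simp only [ampT]; ring
    rw [hid]
    have h1 : ‖A τ y - c τ * u y‖ ≤ C * τ ^ ((k : ℝ) - 1/2) := hR y
    have h2 : ‖pdC j (A τ) y‖ ≤ C * τ ^ k := by
      have := hL [j] (by simp) y
      simpa [pdIter] using this
    calc ‖_ + _‖ ≤ τ * |ξ j| * ‖A τ y - c τ * u y‖ + Real.sqrt τ * ‖pdC j (A τ) y‖ := by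
          refine le_trans (norm_add_le _ _) ?_
          rw [ec1, ec2]
      _ ≤ τ * |ξ j| * (C * τ ^ ((k:ℝ) - 1/2)) + Real.sqrt τ * (C * τ ^ k) := by
          have ha := mul_le_mul_of_nonneg_left h1 (mul_nonneg h0.le (abs_nonneg (ξ j)))
          have hb := mul_le_mul_of_nonneg_left h2 hsq0
          linarith
      _ ≤ (|ξ j| + 1) * C * τ ^ (((k+1 : ℕ) : ℝ) - 1/2) := by
          rw [← tau_mul_rpow hτ k]
          have hsm2 : Real.sqrt τ * (C * τ ^ k) = C * (Real.sqrt τ * τ ^ k) := by ring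
          rw [hsm2, sqrt_mul_pow_le hτ k, ← tau_mul_rpow hτ k]
          have hrp : (0:ℝ) < τ ^ ((k:ℝ) - 1/2) := Real.rpow_pos_of_pos h0 _
          nlinarith [abs_nonneg (ξ j)]

lemma GoodAmp.congr {n : ℕ} {u : (Fin n → ℝ) → ℂ} {k k' r : ℕ} {c c' : ℝ → ℂ}
    {A A' : ℝ → (Fin n → ℝ) → ℂ} {r' : ℕ} (h : GoodAmp u k r c A) (hk : k = k')
    (hr : r = r') (hc : c = c') (hA : A = A') : GoodAmp u k' r' c' A' := by
  subst hk; subst hr; subst hc; subst hA; exact h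

lemma GoodAmp.iter {n : ℕ} {u : (Fin n → ℝ) → ℂ} (ξ : Fin n → ℝ) (j : Fin n) (k' : ℕ) :
    ∀ (r k : ℕ) (c : ℝ → ℂ) (A : ℝ → (Fin n → ℝ) → ℂ),
    GoodAmp u k (r + k') c A →
    GoodAmp u (k + k') r (fun τ => (-Complex.I * τ * ξ j) ^ k' * c τ)
      (fun τ => (ampT ξ j τ)^[k'] (A τ)) := by
  induction k' with
  | zero => intro r k c A h; simpa using h
  | succ k' ih =>
    intro r k c A h
    have h1 : GoodAmp u (k + k') (r + 1) (fun τ => (-Complex.I * τ * ξ j) ^ k' * c τ)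
        (fun τ => (ampT ξ j τ)^[k'] (A τ)) := by
      apply ih (r+1) k c A
      exact h.congr rfl (by omega) rfl rfl
    have h2 := h1.step ξ j
    refine h2.congr (by omega) rfl ?_ ?_
    · funext τ; rw [pow_succ]; ring
    · funext τ; funext y
      rw [Function.iterate_succ_apply']

lemma GoodAmp.fold {n : ℕ} {u : (Fin n → ℝ) → ℂ} (ξ : Fin n → ℝ) (α : Fin n → ℕ) :
    ∀ (L : List (Fin n)) (r k : ℕ) (c : ℝ → ℂ) (A : ℝ → (Fin n → ℝ) → ℂ),
    GoodAmp u k (r + (L.map α).sum) c A →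
    GoodAmp u (k + (L.map α).sum) r
      (fun τ => (L.map (fun j => (-Complex.I * τ * ξ j) ^ (α j))).prod * c τ)
      (fun τ => L.foldr (fun j g => (ampT ξ j τ)^[α j] g) (A τ)) := by
  intro L
  induction L with
  | nil => intro r k c A h; simpa using h
  | cons j L ih =>
    intro r k c A h
    have h1 := ih (r + α j) k c A (h.congr rfl (by simp; omega) rfl rfl)
    have h2 := GoodAmp.iter ξ j (α j) r (k + (L.map α).sum) _ _ h1
    refine h2.congr (by simp; omega) rfl ?_ ?_
    · funext τ; simp [List.prod_cons]; ring
    · funext τ; simp [List.foldr_cons]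

lemma goodAmp_base {n : ℕ} {u : (Fin n → ℝ) → ℂ} (hu : ContDiff ℝ (⊤ : ℕ∞) u)
    (hsupp : HasCompactSupport u) (R : ℕ) :
    GoodAmp u 0 R (fun _ => 1) (fun _ => u) := by
  obtain ⟨C₀, hC₀, hbd⟩ := pdIter_bound R u hu hsupp
  refine ⟨fun _ _ => hu, max C₀ 1, le_trans zero_le_one (le_max_right _ _), ?_⟩
  intro τ hτ
  refine ⟨by simp [le_max_right C₀ 1], ?_, ?_⟩
  · intro L hL y
    simpa using le_trans (hbd L hL y) (le_max_left C₀ 1)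
  · intro y
    simp only [one_mul, sub_self, norm_zero]
    positivity


lemma ampT_iterate_contDiff {n : ℕ} (ξ : Fin n → ℝ) (j : Fin n) (τ : ℝ) (k : ℕ)
    {g : (Fin n → ℝ) → ℂ} (hg : ContDiff ℝ (⊤ : ℕ∞) g) : ContDiff ℝ (⊤ : ℕ∞) ((ampT ξ j τ)^[k] g) := by
  induction k with
  | zero => exact hg
  | succ k ih => rw [Function.iterate_succ_apply']; exact ampT_contDiff ξ j τ ih

lemma ampFold_contDiff {n : ℕ} (ξ : Fin n → ℝ) (α : Fin n → ℕ) (τ : ℝ) (L : List (Fin n))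
    {g : (Fin n → ℝ) → ℂ} (hg : ContDiff ℝ (⊤ : ℕ∞) g) :
    ContDiff ℝ (⊤ : ℕ∞) (L.foldr (fun j g => (ampT ξ j τ)^[α j] g) g) := by
  induction L with
  | nil => exact hg
  | cons j L ih => exact ampT_iterate_contDiff ξ j τ (α j) ih

lemma wp_pdPow {n : ℕ} (x₀ ξ : Fin n → ℝ) (τ : ℝ) (j : Fin n) (k : ℕ)
    {A : (Fin n → ℝ) → ℂ} (hA : ContDiff ℝ (⊤ : ℕ∞) A) :
    pdPow j k (fun x => phaseE x₀ ξ τ x * A (Real.sqrt τ • (x - x₀)))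
      = fun x => phaseE x₀ ξ τ x * ((ampT ξ j τ)^[k] A) (Real.sqrt τ • (x - x₀)) := by
  induction k with
  | zero => rfl
  | succ k ih =>
    show pdC j _ = _
    rw [ih, wp_deriv x₀ ξ τ _ ((ampT_iterate_contDiff ξ j τ k hA).differentiable (by simp)) j,
      Function.iterate_succ_apply']
    rfl

lemma wp_fold {n : ℕ} (x₀ ξ : Fin n → ℝ) (τ : ℝ) (α : Fin n → ℕ) (L : List (Fin n))
    {A : (Fin n → ℝ) → ℂ} (hA : ContDiff ℝ (⊤ : ℕ∞) A) :
    L.foldr (fun j g => pdPow j (α j) g) (fun x => phaseE x₀ ξ τ x * A (Real.sqrt τ • (x - x₀)))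
      = fun x => phaseE x₀ ξ τ x *
          (L.foldr (fun j g => (ampT ξ j τ)^[α j] g) A) (Real.sqrt τ • (x - x₀)) := by
  induction L with
  | nil => rfl
  | cons j L ih =>
    show pdPow j (α j) (L.foldr (fun j g => pdPow j (α j) g) _) = _
    rw [ih, wp_pdPow x₀ ξ τ j (α j) (ampFold_contDiff ξ α τ L hA)]
    rfl

lemma wp_rep {n : ℕ} (x₀ ξ : Fin n → ℝ) (τ : ℝ) (α : Fin n → ℕ)
    {u : (Fin n → ℝ) → ℂ} (hu : ContDiff ℝ (⊤ : ℕ∞) u) :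
    pdMulti α (wavePacket x₀ ξ u τ)
      = fun x => phaseE x₀ ξ τ x *
          ((List.finRange n).foldr (fun j g => (ampT ξ j τ)^[α j] g) u)
            (Real.sqrt τ • (x - x₀)) := by
  have : wavePacket x₀ ξ u τ = fun x => phaseE x₀ ξ τ x * u (Real.sqrt τ • (x - x₀)) := rfl
  rw [pdMulti, this, wp_fold x₀ ξ τ α (List.finRange n) hu]


lemma norm_phaseE {n : ℕ} (x₀ ξ : Fin n → ℝ) (τ : ℝ) (x : Fin n → ℝ) :
    ‖phaseE x₀ ξ τ x‖ = 1 := by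
  rw [phaseE, Complex.norm_exp]
  have : (-Complex.I * (τ : ℂ) * (((x - x₀) ⬝ᵥ ξ : ℝ) : ℂ)).re = 0 := by
    simp [Complex.mul_re]
  rw [this, Real.exp_zero]

lemma coeff_id {n : ℕ} (ξ : Fin n → ℝ) (α : Fin n → ℕ) (τ : ℝ) :
    (-Complex.I) ^ (∑ i, α i) *
      ((List.finRange n).map fun j => (-Complex.I * τ * ξ j) ^ (α j)).prod
    = ∏ i, ((-τ * ξ i : ℝ) : ℂ) ^ (α i) := by
  rw [← Fin.prod_univ_def, ← Finset.prod_pow_eq_pow_sum, ← Finset.prod_mul_distrib]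
  apply Finset.prod_congr rfl
  intro i _
  rw [← mul_pow]
  congr 1
  rw [show (-Complex.I) * (-Complex.I * τ * ξ i)
      = (Complex.I ^ 2) * (τ * ξ i) by ring, Complex.I_sq]
  push_cast
  ring

lemma norm_P {n : ℕ} (ξ : Fin n → ℝ) (α : Fin n → ℕ) {τ : ℝ} (hτ : 0 ≤ τ) :
    ‖∏ i, ((-τ * ξ i : ℝ) : ℂ) ^ (α i)‖ = τ ^ (∑ i, α i) * ∏ i, |ξ i| ^ (α i) := by
  rw [norm_prod]
  have : ∀ i, ‖((-τ * ξ i : ℝ) : ℂ) ^ (α i)‖ = (τ * |ξ i|) ^ (α i) := by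
    intro i
    rw [norm_pow, Complex.norm_real]
    congr 1
    rw [Real.norm_eq_abs, abs_mul, abs_neg, abs_of_nonneg hτ]
  simp_rw [this, mul_pow]
  rw [Finset.prod_mul_distrib, Finset.prod_pow_eq_pow_sum]

lemma lipschitz_of_pdC_bound {n : ℕ} {f : (Fin n → ℝ) → ℂ} (hf : ContDiff ℝ 1 f)
    {K : ℝ} (hK : 0 ≤ K) (hbd : ∀ (j : Fin n) (x), ‖pdC j f x‖ ≤ K) (x z : Fin n → ℝ) :
    ‖f x - f z‖ ≤ (n * K) * ‖x - z‖ := by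
  have hd : Differentiable ℝ f := hf.differentiable one_ne_zero
  have hfb : ∀ w, ‖fderiv ℝ f w‖ ≤ n * K := by
    intro w
    apply ContinuousLinearMap.opNorm_le_bound _ (by positivity)
    intro v
    have hv : v = ∑ i, v i • (Pi.single i 1 : Fin n → ℝ) := by
      funext j
      simp [Finset.sum_apply, Pi.single_apply]
    have happ : fderiv ℝ f w v = ∑ i, v i • fderiv ℝ f w (Pi.single i 1) := by
      conv_lhs => rw [hv]
      rw [map_sum]
      exact Finset.sum_congr rfl fun i _ => (fderiv ℝ f w).map_smul _ _
    calc ‖fderiv ℝ f w v‖ = ‖∑ i, v i • fderiv ℝ f w (Pi.single i 1)‖ := by rw [happ]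
      _ ≤ ∑ i, ‖v i • fderiv ℝ f w (Pi.single i 1)‖ := norm_sum_le _ _
      _ ≤ ∑ i : Fin n, ‖v‖ * K := by
          apply Finset.sum_le_sum
          intro i _
          rw [norm_smul]
          have h1 : ‖v i‖ ≤ ‖v‖ := norm_le_pi_norm v i
          have h2 : ‖fderiv ℝ f w (Pi.single i 1)‖ ≤ K := hbd i w
          exact mul_le_mul h1 h2 (norm_nonneg _) (norm_nonneg _)
      _ = n * K * ‖v‖ := by rw [Finset.sum_const, Finset.card_univ]; simp; ring
  have := Convex.norm_image_sub_le_of_norm_fderiv_le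
    (f := f) (s := Set.univ) (fun w _ => hd w) (fun w _ => hfb w) convex_univ
    (Set.mem_univ z) (Set.mem_univ x)
  exact this

lemma weighted_bound {n : ℕ} {u : (Fin n → ℝ) → ℂ} (hu : ContDiff ℝ (⊤ : ℕ∞) u)
    (hsupp : HasCompactSupport u) :
    ∃ M : ℝ, 0 ≤ M ∧ ∀ y : Fin n → ℝ, ‖y‖ * ‖u y‖ ≤ M := by
  have hg : Continuous (fun y : Fin n → ℝ => (‖y‖ : ℂ) * u y) :=
    (Complex.continuous_ofReal.comp continuous_norm).mul hu.continuous
  have hgs : HasCompactSupport (fun y : Fin n → ℝ => (‖y‖ : ℂ) * u y) := by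
    apply HasCompactSupport.mul_left hsupp
  obtain ⟨M, hM⟩ := hgs.exists_bound_of_continuous hg
  refine ⟨M, le_trans (norm_nonneg _) (hM 0), fun y => ?_⟩
  have := hM y
  rwa [norm_mul, Complex.norm_real, Real.norm_eq_abs, abs_of_nonneg (norm_nonneg y)] at this

/-- Action of a differential operator `P = Σ_{|α| ≤ m} a_α(x) D^α`, `D_j = −i∂_j`, with
`C¹` coefficients bounded together with their first derivatives, on a wave packet:
`P u_τ = p_m(x₀, −τξ) u_τ + O(τ^{m − 1/2})` uniformly, where `p_m` is the principal
symbol. -/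
theorem differential_operator_on_wave_packet (n m : ℕ)
    (a : (Fin n → ℕ) → (Fin n → ℝ) → ℂ)
    (ha : ∀ α : Fin n → ℕ, (∑ i, α i) ≤ m → ContDiff ℝ 1 (a α))
    (habd : ∀ α : Fin n → ℕ, (∑ i, α i) ≤ m →
      ∃ K : ℝ, (∀ x, ‖a α x‖ ≤ K) ∧ ∀ (j : Fin n) (x), ‖pdC j (a α) x‖ ≤ K)
    (x₀ ξ : Fin n → ℝ) (u : (Fin n → ℝ) → ℂ)
    (hu : ContDiff ℝ (⊤ : ℕ∞) u) (hsupp : HasCompactSupport u) :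
    ∃ C > 0, ∀ τ : ℝ, 1 ≤ τ → ∀ x : Fin n → ℝ,
      ‖(∑ α ∈ (Fintype.piFinset fun _ : Fin n => Finset.range (m + 1)).filter
            (fun α => (∑ i, α i) ≤ m),
          a α x * ((-Complex.I) ^ (∑ i, α i) * pdMulti α (wavePacket x₀ ξ u τ) x))
        - (∑ α ∈ (Fintype.piFinset fun _ : Fin n => Finset.range (m + 1)).filter
            (fun α => (∑ i, α i) = m),
            a α x₀ * ∏ i, ((-τ * ξ i : ℝ) : ℂ) ^ (α i)) *
          wavePacket x₀ ξ u τ x‖ ≤ C * τ ^ ((m : ℝ) - 1 / 2) := by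
  classical
  have hKex : ∀ α : Fin n → ℕ, ∃ K : ℝ, 0 ≤ K ∧ ((∑ i, α i) ≤ m →
      (∀ x, ‖a α x‖ ≤ K) ∧ ∀ (j : Fin n) (x), ‖pdC j (a α) x‖ ≤ K) := by
    intro α
    by_cases h : (∑ i, α i) ≤ m
    · obtain ⟨K, h1, h2⟩ := habd α h
      exact ⟨max K 0, le_max_right _ _,
        fun _ => ⟨fun x => (h1 x).trans (le_max_left _ _),
                  fun j x => (h2 j x).trans (le_max_left _ _)⟩⟩
    · exact ⟨0, le_rfl, fun hc => absurd hc h⟩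
  choose K hK0 hKa using hKex
  have hGood : ∀ α : Fin n → ℕ, GoodAmp u (∑ i, α i) 0
      (fun τ => ((List.finRange n).map fun j => (-Complex.I * τ * ξ j) ^ (α j)).prod)
      (fun τ => (List.finRange n).foldr (fun j g => (ampT ξ j τ)^[α j] g) u) := by
    intro α
    have h0 := goodAmp_base hu hsupp (((List.finRange n).map α).sum)
    have h1 := GoodAmp.fold ξ α (List.finRange n) 0 0 _ _ (h0.congr rfl (by omega) rfl rfl)
    refine h1.congr ?_ rfl ?_ rfl
    · rw [Fin.sum_univ_def]
      omega
    · funext τ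
      rw [mul_one]
  choose CG hCG0 hCG using fun α => (hGood α).2
  obtain ⟨Mu, hMu⟩ := hsupp.exists_bound_of_continuous hu.continuous
  have hMu0 : 0 ≤ Mu := le_trans (norm_nonneg _) (hMu 0)
  obtain ⟨M₁, hM₁0, hM₁⟩ := weighted_bound hu hsupp
  set B : (Fin n → ℕ) → ℝ := fun α => ∏ i, |ξ i| ^ (α i) with hB
  have hB0 : ∀ α, 0 ≤ B α := fun α => Finset.prod_nonneg fun i _ => pow_nonneg (abs_nonneg _) _
  set S := (Fintype.piFinset fun _ : Fin n => Finset.range (m + 1)).filter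
      (fun α => (∑ i, α i) ≤ m) with hSdef
  have hCnn : ∀ α ∈ S, (0:ℝ) ≤ K α * CG α + K α * B α * Mu + n * K α * B α * M₁ := by
    intro α _
    have := hK0 α; have := hCG0 α; have := hB0 α
    positivity
  have hsumnn : (0:ℝ) ≤ ∑ α ∈ S, (K α * CG α + K α * B α * Mu + n * K α * B α * M₁) :=
    Finset.sum_nonneg hCnn
  refine ⟨(∑ α ∈ S, (K α * CG α + K α * B α * Mu + n * K α * B α * M₁)) + 1, by linarith, ?_⟩
  intro τ hτ x
  have h0 : (0:ℝ) < τ := lt_of_lt_of_le one_pos hτ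
  set y := Real.sqrt τ • (x - x₀) with hy
  set E := phaseE x₀ ξ τ x with hE
  set P : (Fin n → ℕ) → ℂ := fun α => ∏ i, ((-τ * ξ i : ℝ) : ℂ) ^ (α i) with hP
  set cf : (Fin n → ℕ) → ℂ :=
    fun α => ((List.finRange n).map fun j => (-Complex.I * τ * ξ j) ^ (α j)).prod with hcf
  set Af : (Fin n → ℕ) → ℂ :=
    fun α => ((List.finRange n).foldr (fun j g => (ampT ξ j τ)^[α j] g) u) y with hAf
  set R : (Fin n → ℕ) → ℂ := fun α => Af α - cf α * u y with hRdef
  have hrep : ∀ α : Fin n → ℕ, pdMulti α (wavePacket x₀ ξ u τ) x = E * Af α := fun α =>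
    congrFun (wp_rep x₀ ξ τ α hu) x
  have hwp : wavePacket x₀ ξ u τ x = E * u y := rfl
  have hEn : ‖E‖ = 1 := norm_phaseE x₀ ξ τ x
  have hIn : ∀ k : ℕ, ‖(-Complex.I) ^ k‖ = 1 := fun k => by
    rw [norm_pow, norm_neg, Complex.norm_I, one_pow]
  have hτe0 : (0:ℝ) ≤ τ ^ ((m:ℝ) - 1/2) := (Real.rpow_pos_of_pos h0 _).le
  -- the key algebraic identity
  have hTeq : (Fintype.piFinset fun _ : Fin n => Finset.range (m + 1)).filter
      (fun α => (∑ i, α i) = m) = S.filter (fun α => (∑ i, α i) = m) := by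
    rw [hSdef, Finset.filter_filter]
    apply Finset.filter_congr
    intro α _
    constructor
    · intro h; exact ⟨le_of_eq h, h⟩
    · intro h; exact h.2
  have hterm : ∀ α ∈ S, a α x * ((-Complex.I) ^ (∑ i, α i) * pdMulti α (wavePacket x₀ ξ u τ) x)
      = a α x * P α * (E * u y) + a α x * (-Complex.I) ^ (∑ i, α i) * E * R α := by
    intro α _
    rw [hrep α]
    have hc : (-Complex.I) ^ (∑ i, α i) * cf α = P α := coeff_id ξ α τ
    have hAeq : Af α = cf α * u y + R α := by rw [hRdef]; ring
    rw [hAeq]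
    linear_combination (a α x * E * u y) * hc
  have key : (∑ α ∈ S,
        a α x * ((-Complex.I) ^ (∑ i, α i) * pdMulti α (wavePacket x₀ ξ u τ) x))
      - (∑ α ∈ (Fintype.piFinset fun _ : Fin n => Finset.range (m + 1)).filter
          (fun α => (∑ i, α i) = m), a α x₀ * P α) * wavePacket x₀ ξ u τ x
    = (∑ α ∈ S, a α x * (-Complex.I) ^ (∑ i, α i) * E * R α)
      + (∑ α ∈ S.filter (fun α => ¬ (∑ i, α i) = m), a α x * P α * (E * u y))
      + (∑ α ∈ S.filter (fun α => (∑ i, α i) = m), (a α x - a α x₀) * P α * (E * u y)) := by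
    rw [Finset.sum_congr rfl hterm, Finset.sum_add_distrib, hTeq, hwp, Finset.sum_mul]
    rw [← Finset.sum_filter_add_sum_filter_not S (fun α => (∑ i, α i) = m)
      (fun α => a α x * P α * (E * u y))]
    have hsplit : ∑ α ∈ S.filter (fun α => (∑ i, α i) = m),
        (a α x - a α x₀) * P α * (E * u y)
      = (∑ α ∈ S.filter (fun α => (∑ i, α i) = m), a α x * P α * (E * u y))
        - ∑ α ∈ S.filter (fun α => (∑ i, α i) = m), a α x₀ * P α * (E * u y) := by
      rw [← Finset.sum_sub_distrib]
      exact Finset.sum_congr rfl fun α _ => by ring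
    rw [hsplit]
    ring
  rw [key]
  -- now bound the three sums
  have hmem : ∀ α ∈ S, (∑ i, α i) ≤ m := by
    intro α hα
    exact (Finset.mem_filter.mp hα).2
  -- term 1 bound
  have hbd1 : ∀ α ∈ S, ‖a α x * (-Complex.I) ^ (∑ i, α i) * E * R α‖
      ≤ K α * CG α * τ ^ ((m:ℝ) - 1/2) := by
    intro α hα
    have hRb : ‖R α‖ ≤ CG α * τ ^ ((((∑ i, α i) : ℕ) : ℝ) - 1/2) := (hCG α τ hτ).2.2 y
    have hexp : τ ^ ((((∑ i, α i) : ℕ) : ℝ) - 1/2) ≤ τ ^ ((m:ℝ) - 1/2) := by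
      apply Real.rpow_le_rpow_of_exponent_le hτ
      have := hmem α hα
      have h' : ((∑ i, α i : ℕ) : ℝ) ≤ (m : ℝ) := by exact_mod_cast this
      linarith
    calc ‖a α x * (-Complex.I) ^ (∑ i, α i) * E * R α‖
        = ‖a α x‖ * ‖(-Complex.I) ^ (∑ i, α i)‖ * ‖E‖ * ‖R α‖ := by
          rw [norm_mul, norm_mul, norm_mul]
      _ = ‖a α x‖ * ‖R α‖ := by rw [hIn, hEn]; ring
      _ ≤ K α * (CG α * τ ^ ((m:ℝ) - 1/2)) := by
          apply mul_le_mul ((hKa α (hmem α hα)).1 x) (hRb.trans ?_) (norm_nonneg _) (hK0 α)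
          apply mul_le_mul_of_nonneg_left hexp (hCG0 α)
      _ = K α * CG α * τ ^ ((m:ℝ) - 1/2) := by ring
  -- term 2 bound
  have hbd2 : ∀ α ∈ S.filter (fun α => ¬ (∑ i, α i) = m),
      ‖a α x * P α * (E * u y)‖ ≤ K α * B α * Mu * τ ^ ((m:ℝ) - 1/2) := by
    intro α hα
    obtain ⟨hαS, hne⟩ := Finset.mem_filter.mp hα
    have hle := hmem α hαS
    have hPn : ‖P α‖ = τ ^ (∑ i, α i) * B α := norm_P ξ α h0.le
    have hexp : (τ:ℝ) ^ (∑ i, α i) ≤ τ ^ ((m:ℝ) - 1/2) := by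
      rw [← Real.rpow_natCast τ (∑ i, α i)]
      apply Real.rpow_le_rpow_of_exponent_le hτ
      have h1 : (∑ i, α i) + 1 ≤ m := by omega
      have h2 : ((∑ i, α i : ℕ) : ℝ) + 1 ≤ (m : ℝ) := by exact_mod_cast h1
      linarith
    calc ‖a α x * P α * (E * u y)‖
        = ‖a α x‖ * ‖P α‖ * (‖E‖ * ‖u y‖) := by rw [norm_mul, norm_mul, norm_mul]
      _ = ‖a α x‖ * ‖P α‖ * ‖u y‖ := by rw [hEn]; ring
      _ ≤ K α * (τ ^ (∑ i, α i) * B α) * Mu := by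
          have hbnn : (0:ℝ) ≤ K α * (τ ^ (∑ i, α i) * B α) :=
            mul_nonneg (hK0 α) (mul_nonneg (pow_nonneg h0.le _) (hB0 α))
          apply mul_le_mul _ (hMu y) (norm_nonneg _) hbnn
          rw [← hPn]
          exact mul_le_mul ((hKa α hle).1 x) le_rfl (norm_nonneg _) (hK0 α)
      _ ≤ K α * (τ ^ ((m:ℝ) - 1/2) * B α) * Mu := by
          have := hK0 α; have := hB0 α
          apply mul_le_mul_of_nonneg_right _ hMu0
          apply mul_le_mul_of_nonneg_left _ (hK0 α)
          apply mul_le_mul_of_nonneg_right hexp (hB0 α)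
      _ = K α * B α * Mu * τ ^ ((m:ℝ) - 1/2) := by ring
  -- term 3 bound
  have hsqτ : (0:ℝ) < Real.sqrt τ := Real.sqrt_pos.mpr h0
  have hxy : ‖x - x₀‖ * ‖u y‖ ≤ M₁ / Real.sqrt τ := by
    have hyn : ‖y‖ = Real.sqrt τ * ‖x - x₀‖ := by
      rw [hy, norm_smul, Real.norm_eq_abs, abs_of_nonneg (Real.sqrt_nonneg τ)]
    have := hM₁ y
    rw [hyn] at this
    rw [le_div_iff₀ hsqτ]
    nlinarith
  have hpowdiv : (τ:ℝ) ^ m / Real.sqrt τ = τ ^ ((m:ℝ) - 1/2) := by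
    rw [Real.rpow_sub h0, Real.rpow_natCast, Real.sqrt_eq_rpow]
  have hbd3 : ∀ α ∈ S.filter (fun α => (∑ i, α i) = m),
      ‖(a α x - a α x₀) * P α * (E * u y)‖
        ≤ n * K α * B α * M₁ * τ ^ ((m:ℝ) - 1/2) := by
    intro α hα
    obtain ⟨hαS, heq⟩ := Finset.mem_filter.mp hα
    have hle := hmem α hαS
    have hPn : ‖P α‖ = τ ^ m * B α := by
      rw [hP]
      rw [show m = ∑ i, α i from heq.symm]
      exact norm_P ξ α h0.le
    have hlip := lipschitz_of_pdC_bound (ha α hle) (hK0 α) ((hKa α hle).2) x x₀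
    calc ‖(a α x - a α x₀) * P α * (E * u y)‖
        = ‖a α x - a α x₀‖ * ‖P α‖ * (‖E‖ * ‖u y‖) := by rw [norm_mul, norm_mul, norm_mul]
      _ = ‖a α x - a α x₀‖ * ‖P α‖ * ‖u y‖ := by rw [hEn]; ring
      _ ≤ (n * K α * ‖x - x₀‖) * (τ ^ m * B α) * ‖u y‖ := by
          rw [hPn]
          apply mul_le_mul_of_nonneg_right _ (norm_nonneg _)
          apply mul_le_mul_of_nonneg_right hlip (by positivity)
      _ = (n * K α * B α * τ ^ m) * (‖x - x₀‖ * ‖u y‖) := by ring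
      _ ≤ (n * K α * B α * τ ^ m) * (M₁ / Real.sqrt τ) := by
          apply mul_le_mul_of_nonneg_left hxy
          have := hK0 α; have := hB0 α
          positivity
      _ = n * K α * B α * M₁ * (τ ^ m / Real.sqrt τ) := by ring
      _ = n * K α * B α * M₁ * τ ^ ((m:ℝ) - 1/2) := by rw [hpowdiv]
  -- combine
  have hs1 : ‖∑ α ∈ S, a α x * (-Complex.I) ^ (∑ i, α i) * E * R α‖
      ≤ ∑ α ∈ S, K α * CG α * τ ^ ((m:ℝ) - 1/2) :=
    (norm_sum_le _ _).trans (Finset.sum_le_sum hbd1)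
  have hs2 : ‖∑ α ∈ S.filter (fun α => ¬ (∑ i, α i) = m), a α x * P α * (E * u y)‖
      ≤ ∑ α ∈ S, K α * B α * Mu * τ ^ ((m:ℝ) - 1/2) := by
    refine (norm_sum_le _ _).trans ((Finset.sum_le_sum hbd2).trans ?_)
    apply Finset.sum_le_sum_of_subset_of_nonneg (Finset.filter_subset _ _)
    intro α _ _
    have := hK0 α; have := hB0 α
    positivity
  have hs3 : ‖∑ α ∈ S.filter (fun α => (∑ i, α i) = m), (a α x - a α x₀) * P α * (E * u y)‖
      ≤ ∑ α ∈ S, n * K α * B α * M₁ * τ ^ ((m:ℝ) - 1/2) := by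
    refine (norm_sum_le _ _).trans ((Finset.sum_le_sum hbd3).trans ?_)
    apply Finset.sum_le_sum_of_subset_of_nonneg (Finset.filter_subset _ _)
    intro α _ _
    have := hK0 α; have := hB0 α
    positivity
  calc ‖_ + _ + _‖ ≤ ‖_ + _‖ + ‖_‖ := norm_add_le _ _
    _ ≤ ‖∑ α ∈ S, a α x * (-Complex.I) ^ (∑ i, α i) * E * R α‖
        + ‖∑ α ∈ S.filter (fun α => ¬ (∑ i, α i) = m), a α x * P α * (E * u y)‖
        + ‖∑ α ∈ S.filter (fun α => (∑ i, α i) = m), (a α x - a α x₀) * P α * (E * u y)‖ := by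
        have := norm_add_le (∑ α ∈ S, a α x * (-Complex.I) ^ (∑ i, α i) * E * R α)
          (∑ α ∈ S.filter (fun α => ¬ (∑ i, α i) = m), a α x * P α * (E * u y))
        linarith
    _ ≤ (∑ α ∈ S, K α * CG α * τ ^ ((m:ℝ) - 1/2))
        + (∑ α ∈ S, K α * B α * Mu * τ ^ ((m:ℝ) - 1/2))
        + (∑ α ∈ S, n * K α * B α * M₁ * τ ^ ((m:ℝ) - 1/2)) := by linarith
    _ = (∑ α ∈ S, (K α * CG α + K α * B α * Mu + n * K α * B α * M₁)) * τ ^ ((m:ℝ) - 1/2) := by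
        rw [← Finset.sum_add_distrib, ← Finset.sum_add_distrib, Finset.sum_mul]
        exact Finset.sum_congr rfl fun α _ => by ring
    _ ≤ ((∑ α ∈ S, (K α * CG α + K α * B α * Mu + n * K α * B α * M₁)) + 1)
          * τ ^ ((m:ℝ) - 1/2) := by nlinarith
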